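/- arXiv:0803.1413 — 2 statements merged into one kernel-verified Lean document; each statement's English description precedes it below -/
import Mathlib

section
/- Let λ, μ : ℤ → ℝ be functions with λₙ > 0 and μₙ > 0 for all n ∈ ℤ, and let ν : ℤ → ℝ be a sequence of positive numbers satisfying ν_{n+1}·λₙ − νₙ·(λₙ + μₙ) + ν_{n−1}·μₙ = 0 for all n ∈ ℤ. Fix k ∈ ℤ and suppose p : ℤ → ℝ → ℝ is such that each t ↦ p_n(t) is differentiable on [0, ∞), satisfies the forward Kolmogorov equations d/dt p_n(t) = λ_{n−1}·p_{n−1}(t) − (λₙ + μₙ)·p_n(t) + μ_{n+1}·p_{n+1}(t) for all n ∈ ℤ and t ≥ 0, and satisfies the initial conditions p_n(0) = 1 if n = k and p_n(0) = 0 if n ≠ k. Then the functions p̃_n(t) := (νₙ/ν_k)·p_n(t) satisfy the forward Kolmogorov equations d/dt p̃_n(t) = λ̃_{n−1}·p̃_{n−1}(t) − (λ̃ₙ + μ̃ₙ)·p̃_n(t) + μ̃_{n+1}·p̃_{n+1}(t) for all n ∈ ℤ and t ≥ 0, where λ̃ₙ = λₙ·ν_{n+1}/νₙ and μ̃ₙ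 = μₙ·ν_{n−1}/νₙ, and they satisfy the same initial conditions p̃_n(0) = 1 if n = k and p̃_n(0) = 0 if n ≠ k. -/
/-!
The positive solution `ν` of `ν (n+1) λₙ - ν n (λₙ + μₙ) + ν (n-1) μₙ = 0` is a harmonic function
for the generator of the process, so conjugating the generator by the diagonal matrix `diag ν`
(Doob's `h`-transform) turns the forward equations with rates `λ, μ` into those with rates
`λ̃, μ̃`: the right-hand side of the transformed system at `ν · p` is `ν` times the original
right-hand side at `p`. The delta initial condition is preserved because the factor `ν n / ν k`
is `1` at `n = k`.
-/

def forwardKolmogorovRHS (lam mu x : ℤ → ℝ) (n : ℤ) : ℝ :=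
  lam (n - 1) * x (n - 1) - (lam n + mu n) * x n + mu (n + 1) * x (n + 1)

theorem forwardKolmogorovRHS_transform (lam mu nu x : ℤ → ℝ) (a : ℝ) (n : ℤ)
    (hnu : ∀ m, nu m ≠ 0)
    (hcond : nu (n + 1) * lam n - nu n * (lam n + mu n) + nu (n - 1) * mu n = 0) :
    forwardKolmogorovRHS (fun m => lam m * nu (m + 1) / nu m) (fun m => mu m * nu (m - 1) / nu m)
        (fun m => nu m / a * x m) n =
      nu n / a * forwardKolmogorovRHS lam mu x n := by
  simp only [forwardKolmogorovRHS, sub_add_cancel, add_sub_cancel_right]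
  have := hnu (n - 1); have := hnu n; have := hnu (n + 1)
  field_simp
  linear_combination (-(x n) / a) * hcond

theorem bilateral_bd_transform_general
    (lam mu : ℤ → ℝ)
    (nu : ℤ → ℝ) (hnu : ∀ n, 0 < nu n)
    (hcond : ∀ n : ℤ, nu (n + 1) * lam n - nu n * (lam n + mu n) + nu (n - 1) * mu n = 0)
    (k : ℤ) (p : ℤ → ℝ → ℝ)
    (hderiv : ∀ n : ℤ, ∀ t : ℝ, 0 ≤ t →
      HasDerivWithinAt (p n)
        (lam (n - 1) * p (n - 1) t - (lam n + mu n) * p n t + mu (n + 1) * p (n + 1) t)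
        (Set.Ici 0) t)
    (hinit : ∀ n : ℤ, p n 0 = if n = k then 1 else 0) :
    (∀ n : ℤ, ∀ t : ℝ, 0 ≤ t →
      HasDerivWithinAt (fun τ => nu n / nu k * p n τ)
        ((lam (n - 1) * nu (n - 1 + 1) / nu (n - 1)) * (nu (n - 1) / nu k * p (n - 1) t)
          - (lam n * nu (n + 1) / nu n + mu n * nu (n - 1) / nu n) * (nu n / nu k * p n t)
          + (mu (n + 1) * nu (n + 1 - 1) / nu (n + 1)) * (nu (n + 1) / nu k * p (n + 1) t))
        (Set.Ici 0) t) ∧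
    (∀ n : ℤ, nu n / nu k * p n 0 = if n = k then 1 else 0) := by
  refine ⟨fun n t ht => ?_, fun n => ?_⟩
  · exact ((hderiv n t ht).const_mul (nu n / nu k)).congr_deriv
      (forwardKolmogorovRHS_transform lam mu nu (fun m => p m t) (nu k) n
        (fun m => (hnu m).ne') (hcond n)).symm
  · rw [hinit n]
    split_ifs with hn
    · rw [hn, div_self (hnu k).ne', mul_one]
    · rw [mul_zero]

/-- Transformation of bilateral birth-and-death transition probabilities:
if `p` solves the forward Kolmogorov equations with rates `lam`, `mu` and
delta initial condition at `k`, and `ν` is a positive solution of the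
transformation condition, then `p̃ n t = (ν n / ν k) * p n t` solves the
forward Kolmogorov equations with the transformed rates
`λ̃ n = λ n * ν (n+1) / ν n`, `μ̃ n = μ n * ν (n-1) / ν n`, with the same
delta initial condition. -/
theorem bilateral_bd_transform
    (lam mu : ℤ → ℝ)
    (hlam : ∀ n, 0 < lam n) (hmu : ∀ n, 0 < mu n)
    (nu : ℤ → ℝ) (hnu : ∀ n, 0 < nu n)
    (hcond : ∀ n : ℤ, nu (n + 1) * lam n - nu n * (lam n + mu n) + nu (n - 1) * mu n = 0)
    (k : ℤ) (p : ℤ → ℝ → ℝ)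
    (hderiv : ∀ n : ℤ, ∀ t : ℝ, 0 ≤ t →
      HasDerivWithinAt (p n)
        (lam (n - 1) * p (n - 1) t - (lam n + mu n) * p n t + mu (n + 1) * p (n + 1) t)
        (Set.Ici 0) t)
    (hinit : ∀ n : ℤ, p n 0 = if n = k then 1 else 0) :
    (∀ n : ℤ, ∀ t : ℝ, 0 ≤ t →
      HasDerivWithinAt (fun τ => nu n / nu k * p n τ)
        ((lam (n - 1) * nu (n - 1 + 1) / nu (n - 1)) * (nu (n - 1) / nu k * p (n - 1) t)
          - (lam n * nu (n + 1) / nu n + mu n * nu (n - 1) / nu n) * (nu n / nu k * p n t)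
          + (mu (n + 1) * nu (n + 1 - 1) / nu (n + 1)) * (nu (n + 1) / nu k * p (n + 1) t))
        (Set.Ici 0) t) ∧
    (∀ n : ℤ, nu n / nu k * p n 0 = if n = k then 1 else 0) :=
  bilateral_bd_transform_general lam mu nu hnu hcond k p hderiv hinit
end

section
/- Let λ > 0 and μ > 0 be real numbers and fix k ∈ ℤ. Define p_{k,n}(t) = e^{−(λ+μ)t} · (λ/μ)^{(n−k)/2} · I_{n−k}(2t√(λμ)) for n ∈ ℤ and t ≥ 0, where (λ/μ)^{(n−k)/2} denotes the real power with exponent (n−k)/2 and I_m is the modified Bessel function of the first kind of integer order. Then for every n ∈ ℤ the function t ↦ p_{k,n}(t) is differentiable on [0, ∞) and satisfies the forward Kolmogorov equations with constant rates, d/dt p_{k,n}(t) = λ·p_{k,n−1}(t) − (λ+μ)·p_{k,n}(t) + μ·p_{k,n+1}(t), together with the initial conditions p_{k,n}(0) = 1 if n = k and p_{k,n}(0) = 0 if n ≠ k. -/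
/-!
Differentiating the series termwise gives `I_m' = (I_{m-1} + I_{m+1}) / 2`: the identity
`n · (1/n!) = 1/(n-1)!`, valid for all `n ∈ ℤ` once `1/n!` is read as `0` for `n < 0`,
splits the derivative of each term into a term of `I_{m-1}` and a shifted term of `I_{m+1}`.
With `ρ = λ/μ`, the product rule applied to `e^{-(λ+μ)t} ρ^{m/2} I_m(2t√(λμ))` produces
`-(λ+μ) p_m + √(λμ) ρ^{m/2} (I_{m-1} + I_{m+1})`, and
`λ ρ^{(m-1)/2} = μ ρ^{(m+1)/2} = √(λμ) ρ^{m/2}` turns the last two terms into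
`λ p_{m-1} + μ p_{m+1}`. The initial condition is `I_m(0) = δ_{m0}`.
-/

/-- The modified Bessel function of the first kind of integer order `m`,
defined by the series `I_m(x) = ∑_{j ≥ max(0, -m)} (x/2)^{m+2j} / (j! (m+j)!)`;
the term is `0` when `m + j < 0`, which realizes the starting index `max(0, -m)`. -/
noncomputable def besselI (m : ℤ) (x : ℝ) : ℝ :=
  ∑' j : ℕ, if 0 ≤ m + (j : ℤ) then
      (x / 2) ^ (m + 2 * (j : ℤ)).toNat /
        ((Nat.factorial j : ℝ) * (Nat.factorial (m + (j : ℤ)).toNat : ℝ))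
    else 0

open Nat

noncomputable def invFact (n : ℤ) : ℝ :=
  if 0 ≤ n then ((n.toNat)! : ℝ)⁻¹ else 0

lemma invFact_natCast (n : ℕ) : invFact n = ((n ! : ℕ) : ℝ)⁻¹ := by
  simp [invFact]

lemma invFact_eq_zero_iff {n : ℤ} : invFact n = 0 ↔ n < 0 := by
  unfold invFact
  split_ifs with h
  · simp only [inv_eq_zero, Nat.cast_eq_zero]
    exact ⟨fun h' => absurd h' (factorial_ne_zero _), fun h' => absurd h (not_le.2 h')⟩
  · simpa using h

lemma invFact_nonneg (n : ℤ) : 0 ≤ invFact n := by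
  unfold invFact
  split_ifs <;> positivity

lemma invFact_le_one (n : ℤ) : invFact n ≤ 1 := by
  unfold invFact
  split_ifs
  · exact inv_le_one_of_one_le₀ (mod_cast one_le_iff_ne_zero.2 (factorial_ne_zero _))
  · exact zero_le_one

lemma intCast_mul_invFact (n : ℤ) : n * invFact n = invFact (n - 1) := by
  rcases lt_trichotomy n 0 with hn | rfl | hn
  · rw [invFact_eq_zero_iff.2 hn, invFact_eq_zero_iff.2 (by omega), mul_zero]
  · rw [invFact_eq_zero_iff.2 (show (0 : ℤ) - 1 < 0 by norm_num), Int.cast_zero, zero_mul]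
  · obtain ⟨k, rfl⟩ : ∃ k : ℕ, n = k + 1 := ⟨n.toNat - 1, by omega⟩
    rw [add_sub_cancel_right, ← Nat.cast_one, ← Nat.cast_add, invFact_natCast, invFact_natCast,
      factorial_succ]
    push_cast
    field_simp

/-- The exponent is an integer (`zpow`), so that index shifts need no `toNat`; the coefficient
vanishes whenever `m + 2 * j < 0`. -/
noncomputable def besselTerm (m j : ℤ) (x : ℝ) : ℝ :=
  invFact j * invFact (m + j) * (x / 2) ^ (m + 2 * j)

lemma besselI_eq_tsum (m : ℤ) (x : ℝ) : besselI m x = ∑' j : ℕ, besselTerm m j x := by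
  refine tsum_congr fun j => ?_
  unfold besselTerm
  split_ifs with h
  · obtain ⟨e, he⟩ : ∃ e : ℕ, m + 2 * j = e := ⟨(m + 2 * j).toNat, by omega⟩
    obtain ⟨l, hl⟩ : ∃ l : ℕ, m + j = l := ⟨(m + j).toNat, by omega⟩
    rw [he, hl, invFact_natCast, invFact_natCast, zpow_natCast, Int.toNat_natCast,
      Int.toNat_natCast]
    field_simp
  · rw [invFact_eq_zero_iff.2 (show m + j < 0 by omega), mul_zero, zero_mul]

lemma besselTerm_of_neg {m j : ℤ} (hj : j < 0) (x : ℝ) : besselTerm m j x = 0 := by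
  rw [besselTerm, invFact_eq_zero_iff.2 hj, zero_mul, zero_mul]

lemma add_two_mul_nonneg_of_invFact_mul_ne_zero {m j : ℤ}
    (h : invFact j * invFact (m + j) ≠ 0) : 0 ≤ m + 2 * j := by
  have hj := mt invFact_eq_zero_iff.2 (left_ne_zero_of_mul h)
  have hmj := mt invFact_eq_zero_iff.2 (right_ne_zero_of_mul h)
  omega

lemma abs_besselTerm_le (m j : ℤ) {x R : ℝ} (hx : |x| ≤ R) :
    |besselTerm m j x| ≤ besselTerm m j R := by
  unfold besselTerm
  by_cases hc : invFact j * invFact (m + j) = 0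
  · simp [hc]
  obtain ⟨e, he⟩ : ∃ e : ℕ, m + 2 * j = e :=
    ⟨(m + 2 * j).toNat, by have := add_two_mul_nonneg_of_invFact_mul_ne_zero hc; omega⟩
  have hc₀ : 0 ≤ invFact j * invFact (m + j) := mul_nonneg (invFact_nonneg _) (invFact_nonneg _)
  rw [he, zpow_natCast, zpow_natCast, abs_mul, abs_of_nonneg hc₀, abs_pow, abs_div, abs_two]
  gcongr

lemma besselTerm_le_exp_series (m : ℤ) (j : ℕ) {r : ℝ} (hr : 0 < r) :
    besselTerm m j r ≤ (r / 2) ^ m * (((r / 2) ^ 2) ^ j / (j ! : ℕ)) := by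
  have hr2 : r / 2 ≠ 0 := by positivity
  rw [besselTerm, invFact_natCast, zpow_add₀ hr2, zpow_mul, zpow_natCast, zpow_ofNat]
  calc _ = invFact (m + j) * ((r / 2) ^ m * (((r / 2) ^ 2) ^ j / (j ! : ℕ))) := by ring
    _ ≤ _ := mul_le_of_le_one_left (by positivity) (invFact_le_one _)

lemma summable_besselTerm (m : ℤ) (x : ℝ) : Summable fun j : ℕ => besselTerm m j x := by
  have hR : 0 < |x| + 1 := by positivity
  have hbound : Summable fun j : ℕ => besselTerm m j (|x| + 1) :=
    .of_nonneg_of_le (fun j => (abs_nonneg _).trans (abs_besselTerm_le m j (abs_of_pos hR).le))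
      (fun j => besselTerm_le_exp_series m j hR)
      ((Real.summable_pow_div_factorial _).mul_left _)
  exact .of_norm_bounded hbound fun j => abs_besselTerm_le m j (by linarith)

lemma summable_besselTerm_sub_one (m : ℤ) (x : ℝ) :
    Summable fun j : ℕ => besselTerm m (j - 1) x := by
  rw [← summable_nat_add_iff 1]
  simpa using summable_besselTerm m x

lemma tsum_besselTerm_sub_one (m : ℤ) (x : ℝ) :
    ∑' j : ℕ, besselTerm m (j - 1) x = besselI m x := by
  rw [(summable_besselTerm_sub_one m x).tsum_eq_zero_add, besselI_eq_tsum,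
    besselTerm_of_neg (by omega), zero_add]
  simp

lemma hasDerivAt_besselTerm (m j : ℤ) (x : ℝ) :
    HasDerivAt (besselTerm m j)
      ((besselTerm (m - 1) j x + besselTerm (m + 1) (j - 1) x) / 2) x := by
  have hderiv : HasDerivAt (besselTerm m j)
      (invFact j * invFact (m + j) * ((m + 2 * j : ℤ) * (x / 2) ^ (m + 2 * j - 1) * (1 / 2)))
      x := by
    unfold besselTerm
    by_cases hc : invFact j * invFact (m + j) = 0
    · simp only [hc, zero_mul]
      exact hasDerivAt_const x 0
    · exact ((hasDerivAt_zpow _ (x / 2) (.inr (add_two_mul_nonneg_of_invFact_mul_ne_zero hc))).comp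
        x ((hasDerivAt_id x).div_const 2)).const_mul _
  convert hderiv using 1
  simp only [besselTerm]
  rw [show m - 1 + 2 * j = m + 2 * j - 1 by ring, show m + 1 + 2 * (j - 1) = m + 2 * j - 1 by ring,
    show m - 1 + j = m + j - 1 by ring, show m + 1 + (j - 1) = m + j by ring,
    ← intCast_mul_invFact (m + j), ← intCast_mul_invFact j]
  push_cast
  ring

lemma hasDerivAt_besselI (m : ℤ) (x : ℝ) :
    HasDerivAt (besselI m) ((besselI (m - 1) x + besselI (m + 1) x) / 2) x := by
  set R := |x| + 1
  have hx : x ∈ Metric.ball (0 : ℝ) R := by simp [R]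
  have hbound : ∀ (j : ℕ), ∀ y ∈ Metric.ball (0 : ℝ) R,
      ‖(besselTerm (m - 1) j y + besselTerm (m + 1) (j - 1) y) / 2‖ ≤
        (besselTerm (m - 1) j R + besselTerm (m + 1) (j - 1) R) / 2 := by
    intro j y hy
    rw [mem_ball_zero_iff, Real.norm_eq_abs] at hy
    rw [Real.norm_eq_abs, abs_div, abs_two]
    gcongr
    exact (abs_add_le _ _).trans
      (add_le_add (abs_besselTerm_le _ _ hy.le) (abs_besselTerm_le _ _ hy.le))
  have key := hasDerivAt_tsum_of_isPreconnected
    (((summable_besselTerm (m - 1) R).add (summable_besselTerm_sub_one (m + 1) R)).div_const 2)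
    Metric.isOpen_ball (convex_ball 0 R).isPreconnected
    (fun j y _ => hasDerivAt_besselTerm m j y) hbound hx (summable_besselTerm m x) hx
  rw [tsum_div_const, (summable_besselTerm _ x).tsum_add (summable_besselTerm_sub_one _ x),
    ← besselI_eq_tsum, tsum_besselTerm_sub_one] at key
  simpa only [← besselI_eq_tsum] using key

lemma besselI_zero (m : ℤ) : besselI m 0 = if m = 0 then 1 else 0 := by
  rw [besselI_eq_tsum, tsum_eq_single 0]
  · by_cases hm : m = 0
    · simp [hm, besselTerm, invFact]
    · simp [hm, besselTerm, zero_zpow m hm]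
  · intro j hj
    have hj_pos : (0 : ℤ) < j := by omega
    by_cases he : m + 2 * j = 0
    · rw [besselTerm, invFact_eq_zero_iff.2 (show m + j < 0 by omega), mul_zero, zero_mul]
    · rw [besselTerm, zero_div, zero_zpow _ he, mul_zero]

/-- `birthDeathKernel λ μ m t` is the paper's `p_{k,k+m}(t)`. -/
noncomputable def birthDeathKernel (lam mu : ℝ) (m : ℤ) (t : ℝ) : ℝ :=
  Real.exp (-(lam + mu) * t) * (lam / mu) ^ ((m : ℝ) / 2)
    * besselI m (2 * t * Real.sqrt (lam * mu))

lemma birthDeathKernel_at_zero (lam mu : ℝ) (m : ℤ) :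
    birthDeathKernel lam mu m 0 = if m = 0 then 1 else 0 := by
  by_cases hm : m = 0 <;> simp [birthDeathKernel, besselI_zero, hm]

lemma rpow_intCast_add_one_div_two {x : ℝ} (hx : 0 < x) (m : ℤ) :
    x ^ (((m + 1 : ℤ) : ℝ) / 2) = x ^ ((m : ℝ) / 2) * Real.sqrt x := by
  rw [Real.sqrt_eq_rpow, ← Real.rpow_add hx]
  push_cast
  ring_nf

lemma sqrt_div_mul_sqrt_mul {a b : ℝ} (ha : 0 < a) (hb : 0 < b) :
    Real.sqrt (a / b) * Real.sqrt (a * b) = a := by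
  rw [← Real.sqrt_mul (by positivity), show a / b * (a * b) = a ^ 2 by field_simp,
    Real.sqrt_sq ha.le]

lemma mul_sqrt_div {a b : ℝ} (hb : 0 < b) : b * Real.sqrt (a / b) = Real.sqrt (a * b) := by
  rw [← Real.sqrt_sq hb.le, ← Real.sqrt_mul (sq_nonneg b), Real.sqrt_sq hb.le]
  congr 1
  field_simp

lemma mul_rpow_pred_half {lam mu : ℝ} (hlam : 0 < lam) (hmu : 0 < mu) (m : ℤ) :
    lam * (lam / mu) ^ (((m - 1 : ℤ) : ℝ) / 2) =
      (lam / mu) ^ ((m : ℝ) / 2) * Real.sqrt (lam * mu) := by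
  have h := rpow_intCast_add_one_div_two (div_pos hlam hmu) (m - 1)
  rw [sub_add_cancel] at h
  rw [h, mul_assoc, sqrt_div_mul_sqrt_mul hlam hmu, mul_comm]

lemma mul_rpow_succ_half {lam mu : ℝ} (hlam : 0 < lam) (hmu : 0 < mu) (m : ℤ) :
    mu * (lam / mu) ^ (((m + 1 : ℤ) : ℝ) / 2) =
      (lam / mu) ^ ((m : ℝ) / 2) * Real.sqrt (lam * mu) := by
  rw [rpow_intCast_add_one_div_two (div_pos hlam hmu), mul_left_comm, mul_sqrt_div hmu]

lemma hasDerivAt_birthDeathKernel {lam mu : ℝ} (hlam : 0 < lam) (hmu : 0 < mu) (m : ℤ)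
    (t : ℝ) :
    HasDerivAt (birthDeathKernel lam mu m)
      (lam * birthDeathKernel lam mu (m - 1) t - (lam + mu) * birthDeathKernel lam mu m t
        + mu * birthDeathKernel lam mu (m + 1) t) t := by
  set s := Real.sqrt (lam * mu)
  have hexp : HasDerivAt (fun u => Real.exp (-(lam + mu) * u))
      (Real.exp (-(lam + mu) * t) * -(lam + mu)) t := by
    simpa using ((hasDerivAt_id t).const_mul (-(lam + mu))).exp
  have hbessel : HasDerivAt (fun u => besselI m (2 * u * s))
      ((besselI (m - 1) (2 * t * s) + besselI (m + 1) (2 * t * s)) / 2 * (2 * s)) t := by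
    refine (hasDerivAt_besselI m _).comp t ?_
    simpa using ((hasDerivAt_id t).const_mul 2).mul_const s
  refine ((hexp.mul_const ((lam / mu) ^ ((m : ℝ) / 2))).mul hbessel).congr_deriv ?_
  simp only [birthDeathKernel]
  linear_combination -(Real.exp (-(lam + mu) * t) * besselI (m - 1) (2 * t * s)) *
      mul_rpow_pred_half hlam hmu m -
    (Real.exp (-(lam + mu) * t) * besselI (m + 1) (2 * t * s)) * mul_rpow_succ_half hlam hmu m

/-- The functions `p k n t = e^{-(λ+μ)t} (λ/μ)^{(n-k)/2} I_{n-k}(2t√(λμ))` solve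
the forward Kolmogorov equations of the bilateral birth-and-death process with
constant rates `λ, μ`, with the delta initial condition at `k`. -/
theorem constant_rates_transition_probabilities
    (lam mu : ℝ) (hlam : 0 < lam) (hmu : 0 < mu) (k : ℤ)
    (p : ℤ → ℝ → ℝ)
    (hp : ∀ (n : ℤ) (t : ℝ), 0 ≤ t →
      p n t = Real.exp (-(lam + mu) * t) * (lam / mu) ^ (((n - k : ℤ) : ℝ) / 2)
        * besselI (n - k) (2 * t * Real.sqrt (lam * mu))) :
    (∀ n : ℤ, ∀ t : ℝ, 0 ≤ t →
      HasDerivWithinAt (p n)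
        (lam * p (n - 1) t - (lam + mu) * p n t + mu * p (n + 1) t)
        (Set.Ici 0) t) ∧
    (∀ n : ℤ, p n 0 = if n = k then 1 else 0) := by
  have hp' : ∀ n t, 0 ≤ t → p n t = birthDeathKernel lam mu (n - k) t := hp
  refine ⟨fun n t ht => ?_, fun n => ?_⟩
  · rw [hp' (n - 1) t ht, hp' n t ht, hp' (n + 1) t ht, sub_right_comm, add_sub_right_comm]
    exact (hasDerivAt_birthDeathKernel hlam hmu (n - k) t).hasDerivWithinAt.congr
      (fun u hu => hp' n u hu) (hp' n t ht)
  · rw [hp' n 0 le_rfl, birthDeathKernel_at_zero]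
    simp only [sub_eq_zero]
end
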